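/- With the same setup, Σ_{j=2}^{n−1} R̊(ξ_j,ξ_j) = (1/(n−1))(S − 2 Ric_{11}), where ξ_j = (1/(2√(j(j−1))))(Σ_{p=2}^j e_p⊙e_p − (j−1)e_{j+1}⊙e_{j+1}). -/

import Mathlib

open scoped BigOperators

/-- The symmetric product `u ⊙ v = u ⊗ v + v ⊗ u`, as a matrix in standard coordinates. -/
def sym2 {n : ℕ} (u v : Fin n → ℝ) : Matrix (Fin n) (Fin n) ℝ :=
  Matrix.of fun i j => u i * v j + v i * u j

/-- The inner product `⟨A, B⟩ = tr(Aᵀ B)` on two-tensors. -/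
def minner {n : ℕ} (A B : Matrix (Fin n) (Fin n) ℝ) : ℝ :=
  ∑ i, ∑ j, A i j * B i j

/-- The curvature operator of the second kind as a bilinear form on symmetric two-tensors:
`R̊(h₁,h₂) = Σ R_{iklj} (h₁)_{ij} (h₂)_{kl}`. -/
def Rsec {n : ℕ} (R : Fin n → Fin n → Fin n → Fin n → ℝ)
    (h₁ h₂ : Matrix (Fin n) (Fin n) ℝ) : ℝ :=
  ∑ i, ∑ j, ∑ k, ∑ l, R i k l j * h₁ i j * h₂ k l

/-- Multilinear evaluation of the curvature tensor on vectors. -/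
def Rap {n : ℕ} (R : Fin n → Fin n → Fin n → Fin n → ℝ) (u v w x : Fin n → ℝ) : ℝ :=
  ∑ i, ∑ j, ∑ k, ∑ l, R i j k l * u i * v j * w k * x l

/-- An algebraic curvature tensor: antisymmetric in each pair, symmetric in pairs,
first Bianchi identity. -/
def IsAlgCurv {n : ℕ} (R : Fin n → Fin n → Fin n → Fin n → ℝ) : Prop :=
  (∀ i j k l, R i j k l = - R j i k l) ∧ (∀ i j k l, R i j k l = - R i j l k) ∧
  (∀ i j k l, R i j k l = R k l i j) ∧
  (∀ i j k l, R i j k l + R i k l j + R i l j k = 0)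

/-- An orthonormal family of vectors in Euclidean space. -/
def OrthonormalFam {n m : ℕ} (v : Fin m → Fin n → ℝ) : Prop :=
  ∀ a b, (∑ k, v a k * v b k) = if a = b then (1 : ℝ) else 0

/-- `ξⱼ = (1/(2√(j(j−1))))(Σ_{p=2}^{j} e_p⊙e_p − (j−1)e_{j+1}⊙e_{j+1})`, 0-indexed so that
the 1-indexed vector `e_m` of the paper is `e (m-1)` and the 1-indexed label `j` is the
0-indexed label of `e_{j+1}`. -/
noncomputable def xiFam (n : ℕ) (e : Fin n → Fin n → ℝ) (j : Fin n) :
    Matrix (Fin n) (Fin n) ℝ :=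
  (1/(2*Real.sqrt ((j : ℝ)*((j : ℝ)-1)))) •
    ((∑ p ∈ Finset.univ.filter (fun p : Fin n => 1 ≤ (p : ℕ) ∧ (p : ℕ) < (j : ℕ)),
        sym2 (e p) (e p))
      - ((j : ℝ)-1) • sym2 (e j) (e j))

/-!
`R̊` is bilinear and `R̊(e_p ⊙ e_p, e_q ⊙ e_q) = -4 R(e_p, e_q, e_p, e_q)`. Writing `D_m` for the
sum of `R(e_p, e_q, e_p, e_q)` over `1 ≤ p, q < m` (0-indexed), adding the index `j` gives
`D_{j+1} = D_j + 2 Σ_{p<j} R(e_p, e_j, e_p, e_j)`, and expanding `R̊(ξ_j, ξ_j)` turns it into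
the difference `D_{j+1}/j - D_j/(j-1)`. The sum over `j` telescopes to `D_n/(n-1)`, and removing
the index `0` from the full double sum shows `D_n = S - 2 Ric₁₁`.
-/

open Finset

section Curvature

variable {n : ℕ} (R : Fin n → Fin n → Fin n → Fin n → ℝ)

def Rsec.bilin : Matrix (Fin n) (Fin n) ℝ →ₗ[ℝ] Matrix (Fin n) (Fin n) ℝ →ₗ[ℝ] ℝ :=
  LinearMap.mk₂ ℝ (Rsec R)
    (fun _ _ _ => by simp only [Rsec, Matrix.add_apply, add_mul, mul_add, sum_add_distrib])
    (fun _ _ _ => by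
      simp only [Rsec, Matrix.smul_apply, smul_eq_mul, mul_sum]
      exact sum_congr rfl fun _ _ => sum_congr rfl fun _ _ => sum_congr rfl fun _ _ =>
        sum_congr rfl fun _ _ => by ring)
    (fun _ _ _ => by simp only [Rsec, Matrix.add_apply, mul_add, sum_add_distrib])
    (fun _ _ _ => by
      simp only [Rsec, Matrix.smul_apply, smul_eq_mul, mul_sum]
      exact sum_congr rfl fun _ _ => sum_congr rfl fun _ _ => sum_congr rfl fun _ _ =>
        sum_congr rfl fun _ _ => by ring)

theorem Rsec.bilin_apply (h₁ h₂ : Matrix (Fin n) (Fin n) ℝ) : Rsec.bilin R h₁ h₂ = Rsec R h₁ h₂ :=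
  rfl

theorem Rap_self_left (h₁ : ∀ i j k l, R i j k l = - R j i k l) (u w x : Fin n → ℝ) :
    Rap R u u w x = 0 := by
  have h : Rap R u u w x = - Rap R u u w x := by
    conv_lhs => rw [Rap, sum_comm]
    simp only [Rap, ← sum_neg_distrib]
    refine sum_congr rfl fun i _ => sum_congr rfl fun j _ => sum_congr rfl fun k _ =>
      sum_congr rfl fun l _ => ?_
    rw [h₁]
    ring
  linarith

theorem Rap_swap (h₁ : ∀ i j k l, R i j k l = - R j i k l)
    (h₂ : ∀ i j k l, R i j k l = - R i j l k) (u v w x : Fin n → ℝ) :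
    Rap R u v w x = Rap R v u x w := by
  rw [Rap, Rap, sum_comm]
  refine sum_congr rfl fun j _ => sum_congr rfl fun i _ => ?_
  rw [sum_comm]
  refine sum_congr rfl fun l _ => sum_congr rfl fun k _ => ?_
  rw [h₁, h₂]
  ring

theorem Rsec_sym2_sym2 (h₂ : ∀ i j k l, R i j k l = - R i j l k) (u w : Fin n → ℝ) :
    Rsec R (sym2 u u) (sym2 w w) = -4 * Rap R u w u w := by
  simp only [Rsec, Rap, sym2, Matrix.of_apply, mul_sum]
  refine sum_congr rfl fun i _ => ?_
  rw [sum_comm]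
  refine sum_congr rfl fun k _ => sum_congr rfl fun j _ => sum_congr rfl fun l _ => ?_
  rw [h₂]
  ring

end Curvature

section SectionalSum

variable {n : ℕ} (R : Fin n → Fin n → Fin n → Fin n → ℝ) {ι : Type*} (u : ι → Fin n → ℝ)

def sectionalSum (s t : Finset ι) : ℝ :=
  ∑ p ∈ s, ∑ q ∈ t, Rap R (u p) (u q) (u p) (u q)

theorem Rsec_sum_sym2 (h₂ : ∀ i j k l, R i j k l = - R i j l k) (s t : Finset ι) :
    Rsec R (∑ p ∈ s, sym2 (u p) (u p)) (∑ q ∈ t, sym2 (u q) (u q)) =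
      -4 * sectionalSum R u s t := by
  rw [← Rsec.bilin_apply]
  simp only [map_sum, LinearMap.sum_apply, Rsec.bilin_apply, Rsec_sym2_sym2 R h₂, sectionalSum,
    mul_sum]
  exact sum_comm

variable {R}

theorem sectionalSum_comm (h₁ : ∀ i j k l, R i j k l = - R j i k l)
    (h₂ : ∀ i j k l, R i j k l = - R i j l k) (s t : Finset ι) :
    sectionalSum R u s t = sectionalSum R u t s := by
  rw [sectionalSum, sectionalSum, sum_comm]
  exact sum_congr rfl fun _ _ => sum_congr rfl fun _ _ => Rap_swap R h₁ h₂ _ _ _ _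

theorem sectionalSum_singleton_self (h₁ : ∀ i j k l, R i j k l = - R j i k l) (i : ι) :
    sectionalSum R u {i} {i} = 0 := by
  simp only [sectionalSum, sum_singleton, Rap_self_left R h₁]

theorem sectionalSum_insert_left [DecidableEq ι] {s : Finset ι} (t : Finset ι) {i : ι}
    (hi : i ∉ s) :
    sectionalSum R u (insert i s) t = sectionalSum R u {i} t + sectionalSum R u s t := by
  simp only [sectionalSum, sum_insert hi, sum_singleton]

theorem sectionalSum_insert_right [DecidableEq ι] (s : Finset ι) {t : Finset ι} {i : ι}
    (hi : i ∉ t) :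
    sectionalSum R u s (insert i t) = sectionalSum R u s {i} + sectionalSum R u s t := by
  simp only [sectionalSum, sum_insert hi, sum_singleton, sum_add_distrib]

theorem sectionalSum_insert_insert [DecidableEq ι] (h₁ : ∀ i j k l, R i j k l = - R j i k l)
    (h₂ : ∀ i j k l, R i j k l = - R i j l k) {s : Finset ι} {i : ι} (hi : i ∉ s) :
    sectionalSum R u (insert i s) (insert i s) =
      sectionalSum R u s s + 2 * sectionalSum R u s {i} := by
  rw [sectionalSum_insert_right u _ hi, sectionalSum_insert_left u _ hi,
    sectionalSum_insert_left u _ hi, sectionalSum_singleton_self u h₁,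
    sectionalSum_comm u h₁ h₂ {i} s]
  ring

end SectionalSum

def finIco (n a b : ℕ) : Finset (Fin n) :=
  univ.filter fun p : Fin n => a ≤ (p : ℕ) ∧ (p : ℕ) < b

theorem notMem_finIco {n a b : ℕ} {p : Fin n} (hp : (p : ℕ) < a ∨ b ≤ p) :
    p ∉ finIco n a b := by
  simp only [finIco, mem_filter, mem_univ, true_and]
  omega

theorem finIco_succ {n a : ℕ} {j : Fin n} (ha : a ≤ j) :
    finIco n a (j + 1) = insert j (finIco n a j) := by
  ext p
  simp only [finIco, mem_filter, mem_univ, true_and, mem_insert, Fin.ext_iff]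
  omega

theorem finIco_one_self {n : ℕ} (hn : 0 < n) : finIco n 1 n = univ.erase ⟨0, hn⟩ := by
  ext p
  simp only [finIco, mem_filter, mem_univ, true_and, and_true, mem_erase, ne_eq, Fin.ext_iff]
  have := p.isLt
  omega

theorem sectionalSum_finIco_one_self {n : ℕ} {R : Fin n → Fin n → Fin n → Fin n → ℝ}
    (h₁ : ∀ i j k l, R i j k l = - R j i k l) (h₂ : ∀ i j k l, R i j k l = - R i j l k)
    (u : Fin n → Fin n → ℝ) (hn : 0 < n) :
    sectionalSum R u (finIco n 1 n) (finIco n 1 n) =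
      sectionalSum R u univ univ - 2 * sectionalSum R u {⟨0, hn⟩} univ := by
  have h0 : (⟨0, hn⟩ : Fin n) ∉ finIco n 1 n := notMem_finIco (.inl one_pos)
  rw [← insert_erase (mem_univ ⟨0, hn⟩), ← finIco_one_self hn,
    sectionalSum_insert_insert u h₁ h₂ h0, sectionalSum_insert_right u _ h0,
    sectionalSum_singleton_self u h₁, sectionalSum_comm u h₁ h₂ {_}]
  ring

theorem Rsec_xiFam_self {n : ℕ} {R : Fin n → Fin n → Fin n → Fin n → ℝ}
    (h₁ : ∀ i j k l, R i j k l = - R j i k l) (h₂ : ∀ i j k l, R i j k l = - R i j l k)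
    (e : Fin n → Fin n → ℝ) (j : Fin n) (hj : 2 ≤ (j : ℕ)) :
    Rsec R (xiFam n e j) (xiFam n e j) =
      sectionalSum R e (finIco n 1 (j + 1)) (finIco n 1 (j + 1)) / j -
        sectionalSum R e (finIco n 1 j) (finIco n 1 j) / (j - 1) := by
  have hξ : xiFam n e j = (1 / (2 * √(j * (j - 1) : ℝ))) •
      ((∑ p ∈ finIco n 1 j, sym2 (e p) (e p)) - ((j : ℝ) - 1) • ∑ q ∈ {j}, sym2 (e q) (e q)) := by
    rw [xiFam, sum_singleton]
    rfl
  rw [finIco_succ (by omega), sectionalSum_insert_insert e h₁ h₂ (notMem_finIco (.inr le_rfl)),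
    hξ, ← Rsec.bilin_apply]
  simp only [map_smul, map_sub, LinearMap.smul_apply, LinearMap.sub_apply, smul_eq_mul,
    Rsec.bilin_apply, Rsec_sum_sym2 R e h₂, sectionalSum_comm e h₁ h₂ {j},
    sectionalSum_singleton_self e h₁]
  have hj' : (2 : ℝ) ≤ j := by exact_mod_cast hj
  have hsq : √(j * (j - 1) : ℝ) ^ 2 = j * (j - 1) := Real.sq_sqrt (by nlinarith)
  have hpos : 0 < √(j * (j - 1) : ℝ) := Real.sqrt_pos.mpr (by nlinarith)
  have hj1 : (j : ℝ) - 1 ≠ 0 := by linarith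
  field_simp
  rw [hsq]
  ring

theorem Fin.sum_filter_le_eq_sum_Ico {M : Type*} [AddCommMonoid M] (n m : ℕ) (f : ℕ → M) :
    ∑ j ∈ univ.filter (fun j : Fin n => m ≤ (j : ℕ)), f j = ∑ j ∈ Ico m n, f j := by
  rw [sum_filter, Fin.sum_univ_eq_sum_range (fun j => if m ≤ j then f j else 0), ← sum_filter]
  congr 1
  ext j
  simp only [mem_filter, mem_range, mem_Ico]
  omega

/-- `Σ_{j=2}^{n−1} R̊(ξⱼ,ξⱼ) = (1/(n−1))(S − 2 Ric₁₁)`. -/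
theorem statement_11 (n : ℕ) (hn : 3 ≤ n)
    (R : Fin n → Fin n → Fin n → Fin n → ℝ) (hR : IsAlgCurv R)
    (e : Fin n → Fin n → ℝ) :
    (∑ j ∈ Finset.univ.filter (fun j : Fin n => 2 ≤ (j : ℕ)),
        Rsec R (xiFam n e j) (xiFam n e j)) =
      ((∑ i, ∑ j, Rap R (e i) (e j) (e i) (e j))
        - 2 * (∑ j, Rap R (e ⟨0, by omega⟩) (e j) (e ⟨0, by omega⟩) (e j))) / ((n : ℝ)-1) := by
  obtain ⟨h₁, h₂, -, -⟩ := hR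
  set f : ℕ → ℝ := fun m => sectionalSum R e (finIco n 1 m) (finIco n 1 m) / ((m : ℝ) - 1)
  have hf2 : f 2 = 0 := by
    have h2 : finIco n 1 2 = {⟨1, by omega⟩} := by
      ext p
      simp only [finIco, mem_filter, mem_univ, true_and, mem_singleton, Fin.ext_iff]
      omega
    simp only [f, h2, sectionalSum_singleton_self e h₁, zero_div]
  calc _ = ∑ j ∈ univ.filter (fun j : Fin n => 2 ≤ (j : ℕ)), (f (j + 1) - f j) := by
        refine sum_congr rfl fun j hj => ?_
        rw [Rsec_xiFam_self h₁ h₂ e j (mem_filter.1 hj).2]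
        simp only [f, Nat.cast_add, Nat.cast_one, add_sub_cancel_right]
    _ = f n - f 2 := by
      rw [Fin.sum_filter_le_eq_sum_Ico n 2 (fun j => f (j + 1) - f j), sum_Ico_sub f (by omega)]
    _ = _ := by
      simp only [f, hf2, sub_zero]
      rw [sectionalSum_finIco_one_self h₁ h₂ e (by omega), sectionalSum, sectionalSum,
        sum_singleton]
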